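/- Let Q be a finite acyclic quiver, A = kQ, and V_i finite-dimensional k-vector spaces. Then End_{A \otimes A^{op}}(M(V_*)) \cong \bigoplus_{i \in Q_0} End_k(V_i) as k-algebras, where M(V_*) = \bigoplus_i A e_i \otimes V_i \otimes e_i A. -/

import Mathlib

/-! A bimodule endomorphism `f` of `M(V_*)` is determined by what it does on the summands
`V_p ⊆ M_{p,p}` indexed by the trivial paths: every other summand with vertex `p` is the image of
that one under a composite of structure maps, and `f` commutes with these. Acyclicity makes the
trivial paths the only summand of `M_{p,p}`, so `f` maps it to itself by some `φ_p ∈ End(V_p)`,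
and then `f` acts by `φ_p` on every summand with vertex `p`. Conversely, acting summandwise by any
family `φ` gives a bimodule endomorphism; composition and identity are preserved on the nose. -/

/- The bimodule M(V_*) is modeled by its components M(V_*)_{a,b} = ⊕_{(p,ω : p⇝a,ω' : b⇝p)} V_p
with structure maps the inclusions of direct summands; bimodule endomorphisms are families
of linear maps on the components commuting with all structure maps. -/

open Quiver DirectSum

/-- Index of the direct summands of `M(V_*)_{a,b}`. -/
abbrev MIdx (Q : Type) [Quiver.{0} Q] (a b : Q) : Type := Σ p : Q, Path p a × Path b p

/-- The component `M(V_*)_{a,b}`. -/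
abbrev Mc (F : Type) [Field F] (Q : Type) [Quiver.{0} Q]
    (V : Q → Type) [∀ p, AddCommGroup (V p)] [∀ p, Module F (V p)] (a b : Q) : Type :=
  ⨁ (t : MIdx Q a b), V t.1

open scoped Classical in
/-- Left structure map of `M(V_*)` along `γ : a ⟶ a'`. -/
noncomputable def MlAct (F : Type) [Field F] (Q : Type) [Quiver.{0} Q]
    (V : Q → Type) [∀ p, AddCommGroup (V p)] [∀ p, Module F (V p)]
    {a a' : Q} (γ : a ⟶ a') (b : Q) : Mc F Q V a b →ₗ[F] Mc F Q V a' b :=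
  DirectSum.toModule F (MIdx Q a b) _ fun t =>
    DirectSum.lof F (MIdx Q a' b) (fun s => V s.1) ⟨t.1, t.2.1.cons γ, t.2.2⟩

open scoped Classical in
/-- Right structure map of `M(V_*)` along `δ : b' ⟶ b`. -/
noncomputable def MrAct (F : Type) [Field F] (Q : Type) [Quiver.{0} Q]
    (V : Q → Type) [∀ p, AddCommGroup (V p)] [∀ p, Module F (V p)]
    (a : Q) {b b' : Q} (δ : b' ⟶ b) : Mc F Q V a b →ₗ[F] Mc F Q V a b' :=
  DirectSum.toModule F (MIdx Q a b) _ fun t =>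
    DirectSum.lof F (MIdx Q a b') (fun s => V s.1) ⟨t.1, t.2.1, (δ.toPath).comp t.2.2⟩

/-- The space of bimodule endomorphisms of `M(V_*)`. -/
noncomputable def bimodEndM (F : Type) [Field F] (Q : Type) [Quiver.{0} Q]
    (V : Q → Type) [∀ p, AddCommGroup (V p)] [∀ p, Module F (V p)] :
    Submodule F (∀ a b : Q, Mc F Q V a b →ₗ[F] Mc F Q V a b) where
  carrier := {f |
    (∀ (a a' b : Q) (γ : a ⟶ a'),
      (MlAct F Q V γ b).comp (f a b) = (f a' b).comp (MlAct F Q V γ b)) ∧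
    (∀ (a b b' : Q) (δ : b' ⟶ b),
      (MrAct F Q V a δ).comp (f a b) = (f a b').comp (MrAct F Q V a δ))}
  add_mem' := by
    rintro f g ⟨hf1, hf2⟩ ⟨hg1, hg2⟩
    refine ⟨fun a a' b γ => ?_, fun a b b' δ => ?_⟩
    · simp [LinearMap.comp_add, LinearMap.add_comp, hf1 a a' b γ, hg1 a a' b γ]
    · simp [LinearMap.comp_add, LinearMap.add_comp, hf2 a b b' δ, hg2 a b b' δ]
  zero_mem' := by
    refine ⟨fun a a' b γ => ?_, fun a b b' δ => ?_⟩ <;> simp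
  smul_mem' := by
    rintro c f ⟨h1, h2⟩
    refine ⟨fun a a' b γ => ?_, fun a b b' δ => ?_⟩
    · simp [LinearMap.comp_smul, LinearMap.smul_comp, h1 a a' b γ]
    · simp [LinearMap.comp_smul, LinearMap.smul_comp, h2 a b b' δ]

namespace BimodEndM

open scoped Classical

variable {F : Type} [Field F] {Q : Type} [Quiver.{0} Q]
  {V : Q → Type} [∀ p, AddCommGroup (V p)] [∀ p, Module F (V p)]

variable (F V) in
noncomputable abbrev summand {a b : Q} (t : MIdx Q a b) : V t.1 →ₗ[F] Mc F Q V a b :=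
  lof F (MIdx Q a b) (fun s => V s.1) t

abbrev nilIdx (p : Q) : MIdx Q p p := ⟨p, .nil, .nil⟩

theorem MlAct_summand {a a' : Q} (γ : a ⟶ a') (b : Q) {p : Q} (σ : Path p a) (τ : Path b p)
    (v : V p) :
    MlAct F Q V γ b (summand F V ⟨p, σ, τ⟩ v) = summand F V ⟨p, σ.cons γ, τ⟩ v := by
  unfold MlAct; exact toModule_lof F (M := fun t : MIdx Q a b => V t.1) ⟨p, σ, τ⟩ v

theorem MrAct_summand (a : Q) {b b' : Q} (δ : b' ⟶ b) {p : Q} (σ : Path p a) (τ : Path b p)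
    (v : V p) :
    MrAct F Q V a δ (summand F V ⟨p, σ, τ⟩ v) = summand F V ⟨p, σ, δ.toPath.comp τ⟩ v := by
  unfold MrAct; exact toModule_lof F (M := fun t : MIdx Q a b => V t.1) ⟨p, σ, τ⟩ v

section Propagation

variable {f : ∀ a b : Q, Mc F Q V a b →ₗ[F] Mc F Q V a b} (hf : f ∈ bimodEndM F Q V)
  {p : Q} {v w : V p}
include hf

theorem apply_summand_comp_left {a b : Q} {σ : Path p a} {τ : Path b p}
    (h : f a b (summand F V ⟨p, σ, τ⟩ v) = summand F V ⟨p, σ, τ⟩ w) {a' : Q} (ω : Path a a') :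
    f a' b (summand F V ⟨p, σ.comp ω, τ⟩ v) = summand F V ⟨p, σ.comp ω, τ⟩ w := by
  induction ω with
  | nil => exact h
  | cons ω γ ih =>
    rw [Path.comp_cons, ← MlAct_summand, ← LinearMap.comp_apply (f _ b), ← hf.1,
      LinearMap.comp_apply, ih, MlAct_summand]

theorem apply_summand_comp_right {a b : Q} {σ : Path p a} {τ : Path b p}
    (h : f a b (summand F V ⟨p, σ, τ⟩ v) = summand F V ⟨p, σ, τ⟩ w) {b' : Q} (ρ : Path b' b) :
    f a b' (summand F V ⟨p, σ, ρ.comp τ⟩ v) = summand F V ⟨p, σ, ρ.comp τ⟩ w := by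
  induction ρ with
  | nil => rw [Path.nil_comp]; exact h
  | cons ρ γ ih =>
    have hγ : (ρ.cons γ).comp τ = ρ.comp (γ.toPath.comp τ) := by
      rw [← Path.comp_assoc]; rfl
    rw [hγ]
    refine ih ?_
    rw [← MrAct_summand, ← LinearMap.comp_apply (f a _), ← hf.2, LinearMap.comp_apply, h,
      MrAct_summand]

end Propagation

theorem eq_nilIdx (hQ : ∀ (a : Q) (c : Path a a), c = Path.nil) {p : Q} (t : MIdx Q p p) :
    t = nilIdx p := by
  obtain ⟨q, σ, τ⟩ := t
  have hlen : σ.length + τ.length = 0 := by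
    rw [← Path.length_comp, hQ q (σ.comp τ), Path.length_nil]
  obtain rfl := Path.eq_of_length_zero σ (by omega)
  rw [Path.eq_nil_of_length_zero σ (by omega), Path.eq_nil_of_length_zero τ (by omega)]

theorem summand_component_nilIdx (hQ : ∀ (a : Q) (c : Path a a), c = Path.nil) {p : Q}
    (x : Mc F Q V p p) :
    summand F V (nilIdx p) (component F (MIdx Q p p) (fun t => V t.1) (nilIdx p) x) = x := by
  refine ext_component F fun t => ?_
  obtain rfl := eq_nilIdx hQ t
  exact component.lof_self F _ _

variable (F V) in
noncomputable def vertexEnd (f : ∀ a b : Q, Mc F Q V a b →ₗ[F] Mc F Q V a b) (p : Q) :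
    V p →ₗ[F] V p :=
  component F (MIdx Q p p) (fun t => V t.1) (nilIdx p) ∘ₗ f p p ∘ₗ summand F V (nilIdx p)

theorem apply_summand_nilIdx (hQ : ∀ (a : Q) (c : Path a a), c = Path.nil)
    (f : ∀ a b : Q, Mc F Q V a b →ₗ[F] Mc F Q V a b) {p : Q} (v : V p) :
    f p p (summand F V (nilIdx p) v) = summand F V (nilIdx p) (vertexEnd F V f p v) :=
  (summand_component_nilIdx hQ _).symm

theorem apply_summand (hQ : ∀ (a : Q) (c : Path a a), c = Path.nil)
    {f : ∀ a b : Q, Mc F Q V a b →ₗ[F] Mc F Q V a b} (hf : f ∈ bimodEndM F Q V) {a b : Q}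
    (t : MIdx Q a b) (v : V t.1) :
    f a b (summand F V t v) = summand F V t (vertexEnd F V f t.1 v) := by
  obtain ⟨p, σ, τ⟩ := t
  have hright := apply_summand_comp_right hf (apply_summand_nilIdx hQ f v) τ
  rw [Path.comp_nil] at hright
  have hboth := apply_summand_comp_left hf hright σ
  rw [Path.nil_comp] at hboth
  exact hboth

variable (F V) in
noncomputable def diagEnd (φ : ∀ p : Q, V p →ₗ[F] V p) (a b : Q) :
    Mc F Q V a b →ₗ[F] Mc F Q V a b :=
  lmap fun t : MIdx Q a b => φ t.1

theorem diagEnd_mem (φ : ∀ p : Q, V p →ₗ[F] V p) : diagEnd F V φ ∈ bimodEndM F Q V := by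
  refine ⟨fun a a' b γ => ?_, fun a b b' δ => ?_⟩ <;>
  · refine linearMap_ext F fun ⟨p, σ, τ⟩ => LinearMap.ext fun v => ?_
    simp [diagEnd, MlAct_summand, MrAct_summand]

theorem vertexEnd_diagEnd (φ : ∀ p : Q, V p →ₗ[F] V p) : vertexEnd F V (diagEnd F V φ) = φ := by
  funext p
  ext v
  simp [vertexEnd, diagEnd]

theorem diagEnd_vertexEnd (hQ : ∀ (a : Q) (c : Path a a), c = Path.nil)
    {f : ∀ a b : Q, Mc F Q V a b →ₗ[F] Mc F Q V a b} (hf : f ∈ bimodEndM F Q V) :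
    diagEnd F V (vertexEnd F V f) = f := by
  funext a b
  refine linearMap_ext F fun t => LinearMap.ext fun v => ?_
  simp [diagEnd, apply_summand hQ hf]

variable (F V) in
noncomputable def vertexEndEquiv (hQ : ∀ (a : Q) (c : Path a a), c = Path.nil) :
    bimodEndM F Q V ≃ₗ[F] ∀ p : Q, V p →ₗ[F] V p where
  toFun f := vertexEnd F V f
  map_add' f g := by
    funext p
    ext v
    simp [vertexEnd]
  map_smul' c f := by
    funext p
    ext v
    simp [vertexEnd]
  invFun φ := ⟨diagEnd F V φ, diagEnd_mem φ⟩
  left_inv f := Subtype.ext (diagEnd_vertexEnd hQ f.2)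
  right_inv := vertexEnd_diagEnd

theorem comp_mem {f g : ∀ a b : Q, Mc F Q V a b →ₗ[F] Mc F Q V a b}
    (hf : f ∈ bimodEndM F Q V) (hg : g ∈ bimodEndM F Q V) :
    (fun a b => f a b ∘ₗ g a b) ∈ bimodEndM F Q V := by
  refine ⟨fun a a' b γ => ?_, fun a b b' δ => ?_⟩
  · rw [← LinearMap.comp_assoc, hf.1, LinearMap.comp_assoc, hg.1, LinearMap.comp_assoc]
  · rw [← LinearMap.comp_assoc, hf.2, LinearMap.comp_assoc, hg.2, LinearMap.comp_assoc]

theorem id_mem : (fun _ _ => LinearMap.id) ∈ bimodEndM F Q V :=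
  ⟨fun _ _ _ _ => rfl, fun _ _ _ _ => rfl⟩

theorem vertexEnd_comp (hQ : ∀ (a : Q) (c : Path a a), c = Path.nil)
    (f g : ∀ a b : Q, Mc F Q V a b →ₗ[F] Mc F Q V a b) (p : Q) :
    vertexEnd F V (fun a b => f a b ∘ₗ g a b) p = vertexEnd F V f p ∘ₗ vertexEnd F V g p := by
  ext v
  change component F _ _ (nilIdx p) (f p p (g p p (summand F V (nilIdx p) v))) = _
  rw [apply_summand_nilIdx hQ g]
  rfl

theorem vertexEnd_id (p : Q) : vertexEnd F V (fun _ _ => LinearMap.id) p = LinearMap.id := by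
  ext v
  simp [vertexEnd]

end BimodEndM

open BimodEndM in
/-- `End_{A ⊗ A^op}(M(V_*)) ≅ ⊕_{i ∈ Q_0} End_k(V_i)` as `k`-algebras:
there is a `k`-linear equivalence which is moreover multiplicative and unital (composition
of bimodule endomorphisms corresponds to componentwise composition). -/
theorem bimodEndM_iso (F : Type) [Field F] (Q : Type) [Quiver.{0} Q]
    [Fintype Q] [∀ a b : Q, Fintype (a ⟶ b)]
    (hacyclic : ∀ (a : Q) (p : Path a a), p = Path.nil)
    (V : Q → Type) [∀ p, AddCommGroup (V p)] [∀ p, Module F (V p)]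
    [∀ p, FiniteDimensional F (V p)] :
    ∃ e : ↥(bimodEndM F Q V) ≃ₗ[F] (∀ i : Q, V i →ₗ[F] V i),
      (∀ f g : ↥(bimodEndM F Q V), ∃ h : ↥(bimodEndM F Q V),
        (∀ a b : Q, h.val a b = (f.val a b).comp (g.val a b)) ∧
        (∀ i : Q, e h i = (e f i).comp (e g i))) ∧
      (∃ one : ↥(bimodEndM F Q V),
        (∀ a b : Q, one.val a b = LinearMap.id) ∧
        (∀ i : Q, e one i = LinearMap.id)) :=
  ⟨vertexEndEquiv F V hacyclic,
    fun f g => ⟨⟨_, comp_mem f.2 g.2⟩, fun _ _ => rfl, vertexEnd_comp hacyclic f.1 g.1⟩,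
    ⟨⟨_, id_mem⟩, fun _ _ => rfl, vertexEnd_id⟩⟩
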